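/- For finitely supported real sequences b = {b_I} and β = {β_J}, with σ independent uniform ±1 random signs, the averaged operator norm of the composition P^{0,0}_b P^{σ,1,0}_β satisfies the exact equality ‖P^{0,0}_b P^{σ,1,0}_β‖_{E,2→2} = sup_{J∈𝒟} [ β_J² |J| Σ_{I∈𝒟, J⊊I} b_I² / |I| ]^{1/2}. -/

import Mathlib

open MeasureTheory ProbabilityTheory Real Filter
open scoped ENNReal

attribute [local instance] Classical.propDecidable

noncomputable section

namespace RandomParaproducts

/-- Dyadic intervals: `(n, k)` represents `[k·2ⁿ, (k+1)·2ⁿ)`. -/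
abbrev D : Type := ℤ × ℤ

/-- The length `2ⁿ` of the dyadic interval `(n, k)`. -/
def len (I : D) : ℝ := (2 : ℝ) ^ I.1

/-- The dyadic interval `[k·2ⁿ, (k+1)·2ⁿ)` as a subset of `ℝ`. -/
def ival (I : D) : Set ℝ := Set.Ico ((I.2 : ℝ) * (2 : ℝ) ^ I.1) (((I.2 : ℝ) + 1) * (2 : ℝ) ^ I.1)

/-- The left half of a dyadic interval. -/
def lc (I : D) : D := (I.1 - 1, 2 * I.2)

/-- The right half of a dyadic interval. -/
def rc (I : D) : D := (I.1 - 1, 2 * I.2 + 1)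

/-- The `L²`-normalized Haar function `h_I = h⁰_I`. -/
def haar (I : D) : ℝ → ℝ := fun x =>
  (Real.sqrt (len I))⁻¹ *
    ((ival (rc I)).indicator (fun _ => (1 : ℝ)) x - (ival (lc I)).indicator (fun _ => (1 : ℝ)) x)

/-- The function `h¹_I = |h_I| = |I|^{-1/2} 1_I`. -/
def haar1 (I : D) : ℝ → ℝ := fun x =>
  (Real.sqrt (len I))⁻¹ * (ival I).indicator (fun _ => (1 : ℝ)) x

/-- `h^ε_I`, where `false` codes the exponent `0` and `true` codes the exponent `1`. -/
def hfun : Bool → D → ℝ → ℝ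
  | false => haar
  | true => haar1

/-- The inner product `⟨f, g⟩ = ∫ f g` on `L²(ℝ)`. -/
def ip (f g : ℝ → ℝ) : ℝ := ∫ x, f x * g x

/-- The paraproduct `P^{ε,δ}_b f = ∑_I b_I ⟨f, h^δ_I⟩ h^ε_I` with finitely supported
numerical symbol `b`. -/
def P (e d : Bool) (b : D →₀ ℝ) (f : ℝ → ℝ) : ℝ → ℝ := fun x =>
  ∑ I ∈ b.support, b I * ip f (hfun d I) * hfun e I x

/-- The signed paraproduct `P^{σ,ε,δ}_b f = ∑_I σ_I b_I ⟨f, h^δ_I⟩ h^ε_I`. -/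
def Psig (σ : D → ℝ) (e d : Bool) (b : D →₀ ℝ) (f : ℝ → ℝ) : ℝ → ℝ := fun x =>
  ∑ I ∈ b.support, σ I * (b I * ip f (hfun d I) * hfun e I x)

/-- The square of the `L²(ℝ)` norm, `‖g‖₂² = ∫ g²`. -/
def l2normSq (g : ℝ → ℝ) : ℝ := ∫ x, (g x) ^ 2

/-- The Carleson norm of a sequence `a` whose nonzero entries lie in the finite set `s`:
`sup_J (|J|⁻¹ ∑_{I ⊆ J} a_I² |I|)^{1/2}`. -/
def carlOn (s : Finset D) (a : D → ℝ) : ℝ :=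
  ⨆ J : D, Real.sqrt ((len J)⁻¹ *
    ∑ I ∈ s.filter (fun I => ival I ⊆ ival J), (a I) ^ 2 * len I)

/-- `μ` is the law of independent uniformly distributed random signs `{σ_I : I ∈ 𝒟}`. -/
def IsSignMeasure (μ : Measure (D → ℝ)) : Prop :=
  IsProbabilityMeasure μ ∧
    iIndepFun (m := fun _ : D => (inferInstance : MeasurableSpace ℝ)) (fun I σ => σ I) μ ∧
    ∀ I : D, μ.map (fun σ => σ I) =
      (2⁻¹ : ℝ≥0∞) • (Measure.dirac (1 : ℝ) + Measure.dirac (-1 : ℝ))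

/-- `f` is a unit vector of `L²(ℝ)`. -/
def UnitL2 (f : ℝ → ℝ) : Prop := MemLp f 2 volume ∧ eLpNorm f 2 volume = 1

/-- The operator norm on `L²(ℝ)` of a map defined on functions. -/
def opNorm (T : (ℝ → ℝ) → ℝ → ℝ) : ℝ :=
  ⨆ f : {f : ℝ → ℝ // UnitL2 f}, Real.sqrt (l2normSq (T f.1))

/-- The averaged operator norm `sup_{‖f‖₂ = 1} (𝔼 ‖T_σ f‖₂²)^{1/2}`. -/
def avgOpNorm (μ : Measure (D → ℝ)) (T : (D → ℝ) → (ℝ → ℝ) → ℝ → ℝ) : ℝ :=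
  ⨆ f : {f : ℝ → ℝ // UnitL2 f}, Real.sqrt (∫ σ, l2normSq (T σ f.1) ∂μ)

/-- `b` is the finite linear combination of Haar functions with coefficients `c`. -/
def FinHaar (b : ℝ → ℝ) (c : D →₀ ℝ) : Prop :=
  b = fun x => ∑ I ∈ c.support, c I * haar I x

/-- The paraproduct `P^{ε,γ}_{b,α} f = ∑_{I} (⟨b, h^α_I⟩/|I|^{1/2}) ⟨f, h^γ_I⟩ h^ε_I` with
function symbol `b`, the sum extended over a finite set `s` containing all the
nonvanishing terms. -/
def Pb (s : Finset D) (e g a : Bool) (b : ℝ → ℝ) (f : ℝ → ℝ) : ℝ → ℝ := fun x =>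
  ∑ I ∈ s, (ip b (hfun a I) / Real.sqrt (len I)) * ip f (hfun g I) * hfun e I x

lemma measurableSet_ival (I : D) : MeasurableSet (ival I) := measurableSet_Ico

lemma volume_ival_ne_top (I : D) : volume (ival I) ≠ ⊤ := by
  simp only [ival, Real.volume_Ico]; exact ENNReal.ofReal_ne_top

lemma memℒp_haar (I : D) : MemLp (haar I) 2 volume := by
  have h1 : MemLp ((ival (rc I)).indicator (fun _ => (1 : ℝ))) 2 volume :=
    memLp_indicator_const 2 (measurableSet_ival _) 1 (Or.inr (volume_ival_ne_top _))
  have h2 : MemLp ((ival (lc I)).indicator (fun _ => (1 : ℝ))) 2 volume :=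
    memLp_indicator_const 2 (measurableSet_ival _) 1 (Or.inr (volume_ival_ne_top _))
  exact ((h1.sub h2).const_mul ((Real.sqrt (len I))⁻¹))

/-- The Haar function `h_I` as an element of `L²(ℝ)`. -/
def haarLp (I : D) : Lp ℝ 2 (volume : Measure ℝ) := (memℒp_haar I).toLp (haar I)

/-- The random Haar multiplier `T_σ f = ∑_{I ∈ 𝒟} σ_I ⟨f, h_I⟩ h_I`, as an element of
`L²(ℝ)`; the (infinite) sum converges unconditionally in `L²`. -/
def Tfull (σ : D → ℝ) (g : ℝ → ℝ) : Lp ℝ 2 (volume : Measure ℝ) :=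
  ∑' I : D, (σ I * ip g (haar I)) • haarLp I

/-- The composition `M_b T_σ M_β` applied to `f`, as a function. -/
def MbTM (σ : D → ℝ) (b β f : ℝ → ℝ) : ℝ → ℝ := fun x =>
  b x * (Tfull σ fun y => β y * f y) x


/-!
In the Haar basis, `‖P^{0,0}_b P^{σ,1,0}_β f‖₂² = ∑_I b_I² (∑_J σ_J β_J ⟨f, h_J⟩ ⟨h¹_J, h_I⟩)²`,
and averaging over the signs removes the cross terms. Since `h_I` is constant on each half of `I`
and has mean zero, `⟨h¹_J, h_I⟩² = |J|/|I|` if `J ⊊ I` and `0` otherwise. Hence the average is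
`∑_J K_J ⟨f, h_J⟩²` with `K_J = β_J² |J| ∑_{I ⊋ J} b_I²/|I|`, which by Bessel's inequality is at
most `sup_J K_J` on unit vectors, with equality at `f = h_J`.
-/

lemma len_pos (I : D) : 0 < len I := zpow_pos two_pos _

lemma len_rc (I : D) : len (rc I) = len (lc I) := rfl

-- The dyadic interval of scale `n` containing `x` is indexed by `⌊x / 2ⁿ⌋`, so nesting of
-- dyadic intervals reduces to integer division by powers of two.
lemma mem_ival_iff {I : D} {x : ℝ} : x ∈ ival I ↔ ⌊x / len I⌋ = I.2 := by
  rw [Int.floor_eq_iff, le_div_iff₀ (len_pos I), div_lt_iff₀ (len_pos I)]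
  rfl

lemma left_mem_ival (I : D) : (I.2 : ℝ) * len I ∈ ival I := by
  rw [mem_ival_iff, mul_div_cancel_right₀ _ (len_pos I).ne', Int.floor_intCast]

lemma floor_div_two_zpow_of_le {n m : ℤ} (h : n ≤ m) (x : ℝ) :
    ⌊x / (2 : ℝ) ^ m⌋ = ⌊x / (2 : ℝ) ^ n⌋ / ((2 ^ (m - n).toNat : ℕ) : ℤ) := by
  have hm : (2 : ℝ) ^ m = (2 : ℝ) ^ n * ((2 ^ (m - n).toNat : ℕ) : ℝ) := by
    rw [Nat.cast_pow, Nat.cast_ofNat, ← zpow_natCast, Int.toNat_of_nonneg (by omega),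
      ← zpow_add₀ two_ne_zero, add_sub_cancel]
  rw [hm, ← div_div, Int.floor_div_natCast]

lemma floor_div_len_lc (I : D) (x : ℝ) : ⌊x / len I⌋ = ⌊x / len (lc I)⌋ / 2 := by
  simpa [len, lc] using floor_div_two_zpow_of_le (by omega : I.1 - 1 ≤ I.1) x

lemma mem_ival_iff_mem_lc_or_mem_rc {I : D} {x : ℝ} :
    x ∈ ival I ↔ x ∈ ival (lc I) ∨ x ∈ ival (rc I) := by
  rw [mem_ival_iff, mem_ival_iff, mem_ival_iff, len_rc, floor_div_len_lc]
  simp only [lc, rc]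
  omega

lemma disjoint_lc_rc (I : D) : Disjoint (ival (lc I)) (ival (rc I)) := by
  refine Set.disjoint_left.2 fun x hl hr => ?_
  rw [mem_ival_iff] at hl hr
  rw [len_rc, hl] at hr
  simp only [lc, rc] at hr
  omega

lemma ival_subset_of_le {A B : D} (h : A.1 ≤ B.1) {x : ℝ} (hxA : x ∈ ival A)
    (hxB : x ∈ ival B) : ival A ⊆ ival B := by
  intro y hy
  rw [mem_ival_iff] at hxA hxB hy ⊢
  simp only [len] at hxA hxB hy ⊢
  rw [floor_div_two_zpow_of_le h] at hxB ⊢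
  rw [hy, ← hxA, hxB]

lemma volume_ival (I : D) : volume (ival I) = ENNReal.ofReal (len I) := by
  rw [ival, Real.volume_Ico, len]
  ring_nf

lemma len_le_of_ival_subset {A B : D} (h : ival A ⊆ ival B) : len A ≤ len B := by
  have := measure_mono (μ := volume) h
  rwa [volume_ival, volume_ival, ENNReal.ofReal_le_ofReal_iff (len_pos B).le] at this

lemma le_of_ival_subset {A B : D} (h : ival A ⊆ ival B) : A.1 ≤ B.1 :=
  (zpow_le_zpow_iff_right₀ one_lt_two).1 (len_le_of_ival_subset h)

lemma ival_injective : Function.Injective ival := by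
  intro A B h
  have h1 : A.1 = B.1 := le_antisymm (le_of_ival_subset h.le) (le_of_ival_subset h.ge)
  have hx := left_mem_ival A
  rw [h, mem_ival_iff, show len A = len B by rw [len, len, h1],
    mul_div_cancel_right₀ _ (len_pos B).ne', Int.floor_intCast] at hx
  exact Prod.ext h1 hx

lemma ival_subset_or_subset_or_disjoint (A B : D) :
    ival A ⊆ ival B ∨ ival B ⊆ ival A ∨ Disjoint (ival A) (ival B) := by
  by_contra! h
  obtain ⟨hAB, hBA, hdisj⟩ := h
  obtain ⟨x, hxA, hxB⟩ := Set.not_disjoint_iff.1 hdisj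
  rcases le_total A.1 B.1 with hle | hle
  · exact hAB (ival_subset_of_le hle hxA hxB)
  · exact hBA (ival_subset_of_le hle hxB hxA)

lemma ival_subset_lc_or_rc {J I : D} (h : ival J ⊂ ival I) :
    ival J ⊆ ival (lc I) ∨ ival J ⊆ ival (rc I) := by
  obtain ⟨x, hx⟩ : (ival J).Nonempty := ⟨_, left_mem_ival J⟩
  have hlt : J.1 < I.1 := by
    refine lt_of_le_of_ne (le_of_ival_subset h.subset) fun he => h.not_subset ?_
    exact ival_subset_of_le he.ge (h.subset hx) hx
  rcases mem_ival_iff_mem_lc_or_mem_rc.1 (h.subset hx) with hc | hc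
  · exact Or.inl (ival_subset_of_le (by simp only [lc]; omega) hx hc)
  · exact Or.inr (ival_subset_of_le (by simp only [rc]; omega) hx hc)

lemma integral_indicator_ival (I : D) : ∫ x, (ival I).indicator (fun _ => (1 : ℝ)) x = len I := by
  rw [← Pi.one_def, integral_indicator_one (measurableSet_ival I), measureReal_def, volume_ival,
    ENNReal.toReal_ofReal (len_pos I).le]

lemma integrable_indicator_ival (I : D) :
    Integrable ((ival I).indicator fun _ => (1 : ℝ)) volume :=
  (integrable_indicator_iff (measurableSet_ival I)).2 (integrableOn_const (volume_ival_ne_top I))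

lemma haar_of_mem_lc {I : D} {x : ℝ} (hx : x ∈ ival (lc I)) : haar I x = -(√(len I))⁻¹ := by
  have : x ∉ ival (rc I) := Set.disjoint_left.1 (disjoint_lc_rc I) hx
  simp [haar, hx, this]

lemma haar_of_mem_rc {I : D} {x : ℝ} (hx : x ∈ ival (rc I)) : haar I x = (√(len I))⁻¹ := by
  have : x ∉ ival (lc I) := Set.disjoint_right.1 (disjoint_lc_rc I) hx
  simp [haar, hx, this]

lemma haar_of_notMem {I : D} {x : ℝ} (hx : x ∉ ival I) : haar I x = 0 := by
  rw [mem_ival_iff_mem_lc_or_mem_rc, not_or] at hx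
  simp [haar, hx.1, hx.2]

lemma haar1_of_mem {I : D} {x : ℝ} (hx : x ∈ ival I) : haar1 I x = (√(len I))⁻¹ := by
  simp [haar1, hx]

lemma haar1_of_notMem {I : D} {x : ℝ} (hx : x ∉ ival I) : haar1 I x = 0 := by
  simp [haar1, hx]

lemma haar_mul_self (I : D) (x : ℝ) : haar I x * haar I x = (√(len I))⁻¹ * haar1 I x := by
  by_cases hx : x ∈ ival I
  · rw [haar1_of_mem hx]
    rcases mem_ival_iff_mem_lc_or_mem_rc.1 hx with hc | hc
    · rw [haar_of_mem_lc hc, neg_mul_neg]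
    · rw [haar_of_mem_rc hc]
  · rw [haar_of_notMem hx, haar1_of_notMem hx, mul_zero, mul_zero]

lemma integral_haar (I : D) : ∫ x, haar I x = 0 := by
  simp only [haar]
  rw [integral_const_mul, integral_sub (integrable_indicator_ival _)
    (integrable_indicator_ival _), integral_indicator_ival, integral_indicator_ival, len_rc,
    sub_self, mul_zero]

lemma integral_haar1 (I : D) : ∫ x, haar1 I x = (√(len I))⁻¹ * len I := by
  simp only [haar1]
  rw [integral_const_mul, integral_indicator_ival]

lemma ip_comm (f g : ℝ → ℝ) : ip f g = ip g f := by
  simp only [ip, mul_comm]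

lemma ip_eq_mul_integral_of_eqOn {f g : ℝ → ℝ} {S : Set ℝ} {c : ℝ} (hf : ∀ x ∉ S, f x = 0)
    (hg : ∀ x ∈ S, g x = c) : ip f g = c * ∫ x, f x := by
  rw [ip, ← integral_const_mul]
  congr 1 with x
  by_cases hx : x ∈ S
  · rw [hg x hx, mul_comm]
  · rw [hf x hx, zero_mul, mul_zero]

lemma ip_eq_zero_of_disjoint {f g : ℝ → ℝ} {S T : Set ℝ} (hf : ∀ x ∉ S, f x = 0)
    (hg : ∀ x ∉ T, g x = 0) (h : Disjoint S T) : ip f g = 0 := by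
  have : (fun x => f x * g x) = fun _ => 0 := by
    ext x
    by_cases hx : x ∈ S
    · rw [hg x (Set.disjoint_left.1 h hx), mul_zero]
    · rw [hf x hx, zero_mul]
  rw [ip, this, integral_zero]

lemma ip_haar_self (I : D) : ip (haar I) (haar I) = 1 := by
  have hI := len_pos I
  rw [ip]
  simp_rw [haar_mul_self]
  rw [integral_const_mul, integral_haar1, ← mul_assoc, ← mul_inv, mul_self_sqrt hI.le,
    inv_mul_cancel₀ hI.ne']

lemma exists_haar_eqOn_of_ssubset {J I : D} (h : ival J ⊂ ival I) :
    ∃ c, c ^ 2 = (len I)⁻¹ ∧ ∀ x ∈ ival J, haar I x = c := by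
  have hc2 : ((√(len I))⁻¹) ^ 2 = (len I)⁻¹ := by rw [inv_pow, sq_sqrt (len_pos I).le]
  rcases ival_subset_lc_or_rc h with hc | hc
  · exact ⟨_, by rw [neg_sq, hc2], fun x hx => haar_of_mem_lc (hc hx)⟩
  · exact ⟨_, hc2, fun x hx => haar_of_mem_rc (hc hx)⟩

lemma ip_haar_haar_of_ssubset {J I : D} (h : ival J ⊂ ival I) : ip (haar J) (haar I) = 0 := by
  obtain ⟨c, -, hc⟩ := exists_haar_eqOn_of_ssubset h
  rw [ip_eq_mul_integral_of_eqOn (fun x => haar_of_notMem) hc, integral_haar, mul_zero]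

lemma ip_haar_haar (I J : D) : ip (haar I) (haar J) = if I = J then 1 else 0 := by
  split_ifs with hIJ
  · rw [hIJ, ip_haar_self]
  have hne : ival I ≠ ival J := ival_injective.ne hIJ
  rcases ival_subset_or_subset_or_disjoint I J with h | h | h
  · exact ip_haar_haar_of_ssubset (h.ssubset_of_ne hne)
  · rw [ip_comm]
    exact ip_haar_haar_of_ssubset (h.ssubset_of_ne hne.symm)
  · exact ip_eq_zero_of_disjoint (fun x => haar_of_notMem) (fun x => haar_of_notMem) h

lemma sq_ip_haar1_haar (J I : D) :
    ip (haar1 J) (haar I) ^ 2 = if ival J ⊂ ival I then len J / len I else 0 := by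
  split_ifs with h
  · obtain ⟨c, hc2, hc⟩ := exists_haar_eqOn_of_ssubset h
    have hJ := len_pos J
    rw [ip_eq_mul_integral_of_eqOn (fun x => haar1_of_notMem) hc, integral_haar1, mul_pow,
      mul_pow, hc2, inv_pow, sq_sqrt hJ.le]
    field_simp
  · have hIJ : ival I ⊆ ival J ∨ Disjoint (ival J) (ival I) := by
      rcases ival_subset_or_subset_or_disjoint I J with h' | h' | h'
      · exact Or.inl h'
      · exact Or.inl ((h'.eq_or_ssubset.resolve_right h).ge)
      · exact Or.inr h'.symm
    rcases hIJ with h' | h'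
    · rw [ip_comm, ip_eq_mul_integral_of_eqOn (fun x => haar_of_notMem)
        (fun x hx => haar1_of_mem (h' hx)), integral_haar, mul_zero, sq, mul_zero]
    · rw [ip_eq_zero_of_disjoint (fun x => haar1_of_notMem) (fun x => haar_of_notMem) h',
        sq, mul_zero]

lemma memLp_haar1 (I : D) : MemLp (haar1 I) 2 volume :=
  (memLp_indicator_const 2 (measurableSet_ival I) 1 (Or.inr (volume_ival_ne_top I))).const_mul _

lemma ip_sum_left {ι : Type*} (s : Finset ι) (c : ι → ℝ) {φ : ι → ℝ → ℝ} {g : ℝ → ℝ}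
    (hφ : ∀ i ∈ s, MemLp (φ i) 2 volume) (hg : MemLp g 2 volume) :
    ip (fun x => ∑ i ∈ s, c i * φ i x) g = ∑ i ∈ s, c i * ip (φ i) g := by
  simp only [ip, Finset.sum_mul, mul_assoc]
  rw [integral_finsetSum]
  · simp only [integral_const_mul]
  · exact fun i hi => ((hφ i hi).integrable_mul hg).const_mul (c i)

lemma l2normSq_sum_haar (s : Finset D) (c : D → ℝ) :
    l2normSq (fun x => ∑ I ∈ s, c I * haar I x) = ∑ I ∈ s, c I ^ 2 := by
  set F := fun x => ∑ I ∈ s, c I * haar I x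
  have hF : MemLp F 2 volume := memLp_finsetSum s fun I _ => (memℒp_haar I).const_mul (c I)
  calc l2normSq F = ip F F := by simp only [l2normSq, ip, sq]
    _ = ∑ I ∈ s, c I * ∑ J ∈ s, c J * ip (haar J) (haar I) := by
      rw [ip_sum_left s c (fun I _ => memℒp_haar I) hF]
      refine Finset.sum_congr rfl fun I _ => ?_
      rw [ip_comm, ip_sum_left s c (fun I _ => memℒp_haar I) (memℒp_haar I)]
    _ = ∑ I ∈ s, c I ^ 2 := by
      refine Finset.sum_congr rfl fun I hI => ?_
      simp [ip_haar_haar, hI, sq]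

lemma inner_haarLp (I : D) {f : ℝ → ℝ} (hf : MemLp f 2 volume) :
    inner ℝ (haarLp I) (hf.toLp f) = ip f (haar I) := by
  rw [L2.inner_def, ip]
  refine integral_congr_ae ?_
  filter_upwards [(memℒp_haar I).coeFn_toLp, hf.coeFn_toLp] with x h1 h2
  simp only [RCLike.inner_apply, conj_trivial, haarLp]
  rw [h1, h2]

lemma orthonormal_haarLp : Orthonormal ℝ haarLp := by
  rw [orthonormal_iff_ite]
  intro I J
  change inner ℝ (haarLp I) ((memℒp_haar J).toLp _) = _
  rw [inner_haarLp, ip_haar_haar]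
  simp only [eq_comm]

lemma unitL2_haar (I : D) : UnitL2 (haar I) := by
  refine ⟨memℒp_haar I, ?_⟩
  have h := orthonormal_haarLp.1 I
  rwa [haarLp, Lp.norm_toLp, ENNReal.toReal_eq_one_iff] at h

lemma sum_sq_ip_haar_le_one {f : ℝ → ℝ} (hf : UnitL2 f) (s : Finset D) :
    ∑ I ∈ s, ip f (haar I) ^ 2 ≤ 1 := by
  have hnorm : ‖hf.1.toLp f‖ = 1 := by rw [Lp.norm_toLp, hf.2, ENNReal.toReal_one]
  have h := orthonormal_haarLp.sum_inner_products_le (s := s) (hf.1.toLp f)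
  simpa only [inner_haarLp, Real.norm_eq_abs, sq_abs, hnorm, one_pow] using h

lemma sq_sum_mul_eq_sum_sum {ι : Type*} (t : Finset ι) (v σ : ι → ℝ) :
    (∑ i ∈ t, σ i * v i) ^ 2 = ∑ i ∈ t, ∑ j ∈ t, v i * v j * (σ i * σ j) := by
  rw [sq, Finset.sum_mul_sum]
  exact Finset.sum_congr rfl fun i _ => Finset.sum_congr rfl fun j _ => by ring

section Signs

variable {μ : Measure (D → ℝ)}

lemma IsSignMeasure.ae_eq_one_or_neg_one (hμ : IsSignMeasure μ) (J : D) :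
    ∀ᵐ σ ∂μ, σ J = 1 ∨ σ J = -1 := by
  have hmeas : MeasurableSet {x : ℝ | x = 1 ∨ x = -1} :=
    (measurableSet_singleton 1).union (measurableSet_singleton (-1))
  refine (ae_map_iff (f := fun σ : D → ℝ => σ J) (measurable_pi_apply J).aemeasurable hmeas).1 ?_
  rw [hμ.2.2 J]
  exact Measure.ae_smul_measure (by simp) _

lemma IsSignMeasure.integral_apply (hμ : IsSignMeasure μ) (J : D) : ∫ σ, σ J ∂μ = 0 := by
  rw [← integral_map (φ := fun σ : D → ℝ => σ J) (f := fun x => x)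
    (measurable_pi_apply J).aemeasurable measurable_id'.aestronglyMeasurable, hμ.2.2 J,
    integral_smul_measure, integral_add_measure (integrable_dirac (by simp))
    (integrable_dirac (by simp)), integral_dirac, integral_dirac]
  norm_num

lemma IsSignMeasure.integrable_apply_mul_apply (hμ : IsSignMeasure μ) (J J' : D) :
    Integrable (fun σ => σ J * σ J') μ := by
  have := hμ.1
  refine (integrable_const (1 : ℝ)).mono'
    ((measurable_pi_apply J).mul (measurable_pi_apply J')).aestronglyMeasurable ?_
  filter_upwards [hμ.ae_eq_one_or_neg_one J, hμ.ae_eq_one_or_neg_one J'] with σ h h'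
  rcases h with h | h <;> rcases h' with h' | h' <;> simp [h, h']

lemma IsSignMeasure.integral_apply_mul_apply (hμ : IsSignMeasure μ) (J J' : D) :
    ∫ σ, σ J * σ J' ∂μ = if J = J' then 1 else 0 := by
  have := hμ.1
  split_ifs with h
  · subst h
    have hsq : (fun σ : D → ℝ => σ J * σ J) =ᵐ[μ] fun _ => 1 := by
      filter_upwards [hμ.ae_eq_one_or_neg_one J] with σ h
      rcases h with h | h <;> simp [h]
    simp [integral_congr_ae hsq]
  · rw [(hμ.2.1.indepFun h).integral_fun_mul_eq_mul_integral
      (measurable_pi_apply J).aestronglyMeasurable (measurable_pi_apply J').aestronglyMeasurable,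
      hμ.integral_apply, zero_mul]

lemma IsSignMeasure.integrable_sq_sum_mul (hμ : IsSignMeasure μ) (t : Finset D) (v : D → ℝ) :
    Integrable (fun σ => (∑ J ∈ t, σ J * v J) ^ 2) μ := by
  simp only [sq_sum_mul_eq_sum_sum]
  exact integrable_finsetSum _ fun J _ => integrable_finsetSum _ fun J' _ =>
    (hμ.integrable_apply_mul_apply J J').const_mul _

lemma IsSignMeasure.integral_sq_sum_mul (hμ : IsSignMeasure μ) (t : Finset D) (v : D → ℝ) :
    ∫ σ, (∑ J ∈ t, σ J * v J) ^ 2 ∂μ = ∑ J ∈ t, v J ^ 2 := by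
  simp only [sq_sum_mul_eq_sum_sum]
  rw [integral_finsetSum _ fun J _ => integrable_finsetSum _ fun J' _ =>
    (hμ.integrable_apply_mul_apply J J').const_mul _]
  refine Finset.sum_congr rfl fun J hJ => ?_
  rw [integral_finsetSum _ fun J' _ => (hμ.integrable_apply_mul_apply J J').const_mul _]
  simp [integral_const_mul, hμ.integral_apply_mul_apply, hJ, sq]

end Signs

lemma ip_Psig_haar (σ : D → ℝ) (β : D →₀ ℝ) (f : ℝ → ℝ) (I : D) :
    ip (Psig σ true false β f) (haar I) =
      ∑ J ∈ β.support, σ J * (β J * ip f (haar J) * ip (haar1 J) (haar I)) := by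
  have h : Psig σ true false β f =
      fun x => ∑ J ∈ β.support, σ J * (β J * ip f (haar J)) * haar1 J x := by
    ext x
    simp only [Psig, hfun, mul_assoc]
  rw [h, ip_sum_left _ _ (fun J _ => memLp_haar1 J) (memℒp_haar I)]
  simp only [mul_assoc]

lemma l2normSq_P (b : D →₀ ℝ) (g : ℝ → ℝ) :
    l2normSq (P false false b g) = ∑ I ∈ b.support, b I ^ 2 * ip g (haar I) ^ 2 := by
  have h : P false false b g = fun x => ∑ I ∈ b.support, b I * ip g (haar I) * haar I x := rfl
  rw [h, l2normSq_sum_haar]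
  simp only [mul_pow]

lemma sum_mul_sq_ip_haar1_haar (s : Finset D) (a : D → ℝ) (J : D) :
    ∑ I ∈ s, a I * ip (haar1 J) (haar I) ^ 2 =
      len J * ∑ I ∈ s.filter (fun I => ival J ⊂ ival I), a I / len I := by
  rw [Finset.sum_filter, Finset.mul_sum]
  refine Finset.sum_congr rfl fun I _ => ?_
  rw [sq_ip_haar1_haar]
  split_ifs <;> ring

lemma integral_l2normSq_P_Psig {μ : Measure (D → ℝ)} (hμ : IsSignMeasure μ) (b β : D →₀ ℝ)
    (f : ℝ → ℝ) :
    ∫ σ, l2normSq (P false false b (Psig σ true false β f)) ∂μ =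
      ∑ J ∈ β.support,
        (β J ^ 2 * len J * ∑ I ∈ b.support.filter (fun I => ival J ⊂ ival I), b I ^ 2 / len I) *
          ip f (haar J) ^ 2 := by
  simp only [l2normSq_P, ip_Psig_haar]
  rw [integral_finsetSum _ fun I _ => (hμ.integrable_sq_sum_mul _ _).const_mul _]
  simp only [integral_const_mul, hμ.integral_sq_sum_mul]
  rw [Finset.sum_congr rfl fun I _ => Finset.mul_sum _ _ _, Finset.sum_comm]
  refine Finset.sum_congr rfl fun J _ => ?_
  have h := sum_mul_sq_ip_haar1_haar b.support (fun I => b I ^ 2) J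
  calc ∑ I ∈ b.support, b I ^ 2 * (β J * ip f (haar J) * ip (haar1 J) (haar I)) ^ 2
      = β J ^ 2 * ip f (haar J) ^ 2 *
          ∑ I ∈ b.support, b I ^ 2 * ip (haar1 J) (haar I) ^ 2 := by
        rw [Finset.mul_sum]
        exact Finset.sum_congr rfl fun I _ => by ring
    _ = _ := by rw [h]; ring

instance : Nonempty {f : ℝ → ℝ // UnitL2 f} := ⟨⟨haar 0, unitL2_haar 0⟩⟩

lemma iSup_sqrt_sum_mul_sq_ip_haar (s : Finset D) {K : D → ℝ} (hKs : ∀ J ∉ s, K J = 0) :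
    ⨆ f : {f : ℝ → ℝ // UnitL2 f}, √(∑ J ∈ s, K J * ip f.1 (haar J) ^ 2) = ⨆ J, √(K J) := by
  have hbdd : BddAbove (Set.range fun J => √(K J)) := by
    refine ⟨∑ J ∈ s, √(K J), Set.forall_mem_range.2 fun J => ?_⟩
    by_cases hJ : J ∈ s
    · exact Finset.single_le_sum (fun J _ => sqrt_nonneg (K J)) hJ
    · rw [hKs J hJ, sqrt_zero]
      exact Finset.sum_nonneg fun J _ => sqrt_nonneg (K J)
  set M := ⨆ J, √(K J)
  have hM : 0 ≤ M := le_ciSup_of_le hbdd 0 (sqrt_nonneg _)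
  have hle : ∀ f : {f : ℝ → ℝ // UnitL2 f}, √(∑ J ∈ s, K J * ip f.1 (haar J) ^ 2) ≤ M := by
    intro f
    rw [sqrt_le_left hM]
    calc ∑ J ∈ s, K J * ip f.1 (haar J) ^ 2 ≤ ∑ J ∈ s, M ^ 2 * ip f.1 (haar J) ^ 2 :=
          Finset.sum_le_sum fun J _ => mul_le_mul_of_nonneg_right
            ((sqrt_le_left hM).1 (le_ciSup hbdd J)) (sq_nonneg _)
      _ = M ^ 2 * ∑ J ∈ s, ip f.1 (haar J) ^ 2 := (Finset.mul_sum _ _ _).symm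
      _ ≤ M ^ 2 := mul_le_of_le_one_right (sq_nonneg M) (sum_sq_ip_haar_le_one f.2 s)
  have hbdd' : BddAbove (Set.range fun f : {f : ℝ → ℝ // UnitL2 f} =>
      √(∑ J ∈ s, K J * ip f.1 (haar J) ^ 2)) := ⟨M, Set.forall_mem_range.2 hle⟩
  refine le_antisymm (ciSup_le hle) (ciSup_le fun J => ?_)
  by_cases hJ : J ∈ s
  · refine le_ciSup_of_le hbdd' ⟨haar J, unitL2_haar J⟩ (le_of_eq ?_)
    simp [ip_haar_haar, hJ]
  · rw [hKs J hJ, sqrt_zero]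
    exact le_ciSup_of_le hbdd' ⟨haar 0, unitL2_haar 0⟩ (sqrt_nonneg _)

/-- Exact formula for the averaged operator norm of `P^{0,0}_b P^{σ,1,0}_β`. -/
theorem statement9 (b β : D →₀ ℝ) (μ : Measure (D → ℝ)) (hμ : IsSignMeasure μ) :
    avgOpNorm μ (fun σ f => P false false b (Psig σ true false β f)) =
      ⨆ J : D, Real.sqrt ((β J) ^ 2 * len J *
        ∑ I ∈ b.support.filter (fun I => ival J ⊂ ival I), (b I) ^ 2 / len I) := by
  simp only [avgOpNorm, integral_l2normSq_P_Psig hμ]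
  refine iSup_sqrt_sum_mul_sq_ip_haar β.support fun J hJ => ?_
  simp [Finsupp.notMem_support_iff.1 hJ]

end RandomParaproducts
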